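/- Token-level correspondence with the soft Q-function (two-step case): let A be a finite alphabet, let a two-step optimal policy factorize as π*(a_1, a_2) = π*_1(a_1)·π*_2(a_2 | a_1) with all values strictly positive, let the backbone factorize as π_b(a_1, a_2) = π_{b,1}(a_1)·π_{b,2}(a_2 | a_1), and suppose π*(a_1,a_2) = π_b(a_1,a_2)·exp(r(a_1,a_2)/β)/Z. Define the soft value V(a_1) = β·log ∑_{a_2} π_{b,2}(a_2|a_1)·exp(r(a_1,a_2)/β) and soft Q-function Q(a_1, a_2) = r(a_1, a_2). Then the second-step conditional satisfies log π*_2(a_2 | a_1) = log π_{b,2}(a_2 | a_1) + (1/β)·Q(a_1, a_2) − (1/β)·V(a_1). -/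
import Mathlib


open Real Finset

theorem stmt_12 {A : Type*} [Fintype A] [Nonempty A]
    (πb1 : A → ℝ) (hb1 : ∀ a, 0 < πb1 a) (hb1s : ∑ a, πb1 a = 1)
    (πb2 : A → A → ℝ) (hb2 : ∀ a1 a2, 0 < πb2 a1 a2) (hb2s : ∀ a1, ∑ a2, πb2 a1 a2 = 1)
    (r : A × A → ℝ) (β : ℝ) (hβ : 0 < β)
    (Z : ℝ) (hZ : Z = ∑ a1, ∑ a2, πb1 a1 * πb2 a1 a2 * Real.exp (r (a1, a2) / β))
    (πst1 : A → ℝ) (πst2 : A → A → ℝ)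
    (hst1 : ∀ a1, 0 < πst1 a1) (hst2 : ∀ a1 a2, 0 < πst2 a1 a2)
    (hst2s : ∀ a1, ∑ a2, πst2 a1 a2 = 1)
    (hfact : ∀ a1 a2, πst1 a1 * πst2 a1 a2
        = πb1 a1 * πb2 a1 a2 * Real.exp (r (a1, a2) / β) / Z)
    (V : A → ℝ)
    (hV : ∀ a1, V a1 = β * Real.log (∑ a2, πb2 a1 a2 * Real.exp (r (a1, a2) / β)))
    (Q : A → A → ℝ) (hQ : ∀ a1 a2, Q a1 a2 = r (a1, a2)) :
    ∀ a1 a2, Real.log (πst2 a1 a2)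
      = Real.log (πb2 a1 a2) + (1 / β) * Q a1 a2 - (1 / β) * V a1 := by
  intro a1 a2
  set S : ℝ := ∑ a2, πb2 a1 a2 * Real.exp (r (a1, a2) / β) with hS
  have hSpos : 0 < S := Finset.sum_pos
    (fun a _ => mul_pos (hb2 a1 a) (Real.exp_pos _)) Finset.univ_nonempty
  have hZpos : 0 < Z := by
    rw [hZ]
    refine Finset.sum_pos (fun a _ => Finset.sum_pos
      (fun b _ => mul_pos (mul_pos (hb1 a) (hb2 a b)) (Real.exp_pos _))
      Finset.univ_nonempty) Finset.univ_nonempty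
  -- marginal: πst1 a1 = πb1 a1 * S / Z
  have hmarg : πst1 a1 = πb1 a1 * S / Z := by
    have : ∑ b, πst1 a1 * πst2 a1 b = ∑ b, πb1 a1 * πb2 a1 b * Real.exp (r (a1, b) / β) / Z := by
      exact Finset.sum_congr rfl fun b _ => hfact a1 b
    rw [← Finset.mul_sum, hst2s a1, mul_one] at this
    rw [this, ← Finset.sum_div, hS, Finset.mul_sum]
    congr 1
    exact Finset.sum_congr rfl fun b _ => by ring
  have hcond : πst2 a1 a2 = πb2 a1 a2 * Real.exp (r (a1, a2) / β) / S := by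
    have h := hfact a1 a2
    rw [hmarg] at h
    field_simp at h
    have hne : πb1 a1 ≠ 0 := (hb1 a1).ne'
    rcases mul_left_cancel₀ hne (by linarith [h] : πb1 a1 * (S * πst2 a1 a2) = πb1 a1 * (πb2 a1 a2 * Real.exp (r (a1, a2) / β))) with h2
    field_simp
    linarith [h2]
  rw [hcond, Real.log_div (mul_pos (hb2 a1 a2) (Real.exp_pos _)).ne' hSpos.ne',
    Real.log_mul (hb2 a1 a2).ne' (Real.exp_pos _).ne', Real.log_exp, hQ, hV, hS]
  field_simp
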